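/- arXiv:2601.01582 — 7 statements merged into one kernel-verified Lean document; each statement's English description precedes it below -/
import Mathlib

section
/- Let G be a finite group, p a prime, Z a subgroup of the center Z(G) whose order is a power of p, and t ∈ G an element whose order is a power of p. Let π : G → G/Z denote the canonical projection. Then the index of the image π(C_G(t)) of the centralizer of t in the centralizer C_{G/Z}(π(t)) of π(t) in G/Z is a power of p. -/
/-- Let `Z ≤ Z(G)` be a central `p`-subgroup of a finite group `G` and let
`t ∈ G` be a `p`-element. Then the index of the image of `C_G(t)` in
`C_{G/Z}(tZ)` is a power of `p`. -/
theorem index_image_centralizer_in_centralizer_quotient_isPPow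
    (G : Type*) [Group G] [Finite G] (p : ℕ) (hp : p.Prime)
    (Z : Subgroup G) [Z.Normal] (hZle : Z ≤ Subgroup.center G)
    (hZ : IsPGroup p Z)
    (t : G) (ht : ∃ k : ℕ, orderOf t = p ^ k) :
    ∃ m : ℕ,
      ((Subgroup.centralizer {t}).map (QuotientGroup.mk' Z)).relIndex
        (Subgroup.centralizer {QuotientGroup.mk' Z t}) = p ^ m := by
  haveI := Fact.mk hp
  obtain ⟨k, hk⟩ := IsPGroup.iff_card.mp hZ
  set π := QuotientGroup.mk' Z with hπ
  set C := Subgroup.centralizer {t} with hCdef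
  set H := (Subgroup.centralizer {π t}).comap π with hHdef
  have hsurj : Function.Surjective π := QuotientGroup.mk'_surjective Z
  have hZC : Z ≤ C := hZle.trans (Subgroup.center_le_centralizer _)
  -- reduce to a relindex inside G
  have h1 : (C.map π).relIndex (Subgroup.centralizer {π t}) = C.relIndex H := by
    have h2 := Subgroup.relIndex_comap (C.map π) π H
    rw [Subgroup.map_comap_eq_self_of_surjective hsurj] at h2
    rw [← h2, Subgroup.comap_map_eq, QuotientGroup.ker_mk', sup_eq_left.mpr hZC]
  -- membership of commutators in Z
  have hmem : ∀ h : G, h ∈ H → h⁻¹ * t⁻¹ * h * t ∈ Z := by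
    intro h hh
    rw [hHdef, Subgroup.mem_comap, Subgroup.mem_centralizer_singleton_iff,
      ← map_mul, ← map_mul] at hh
    have := (QuotientGroup.eq (s := Z)).mp hh.symm
    simpa [mul_assoc, mul_inv_rev] using this
  -- the commutator homomorphism H →* Z
  let φ : H →* Z :=
  { toFun := fun h => ⟨(h : G)⁻¹ * t⁻¹ * h * t, hmem h h.2⟩
    map_one' := by ext; simp
    map_mul' := by
      intro g h
      ext
      show ((g : G) * h)⁻¹ * t⁻¹ * ((g : G) * h) * t
          = ((g : G)⁻¹ * t⁻¹ * g * t) * ((h : G)⁻¹ * t⁻¹ * h * t)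
      have hc : (g : G)⁻¹ * t⁻¹ * g * t ∈ Subgroup.center G := hZle (hmem g g.2)
      rw [Subgroup.mem_center_iff] at hc
      calc ((g : G) * h)⁻¹ * t⁻¹ * ((g : G) * h) * t
          = (h : G)⁻¹ * ((g : G)⁻¹ * t⁻¹ * g * t) * (t⁻¹ * h * t) := by group
        _ = ((g : G)⁻¹ * t⁻¹ * g * t) * ((h : G)⁻¹ * (t⁻¹ * h * t)) := by
            rw [hc (h : G)⁻¹, mul_assoc]
        _ = ((g : G)⁻¹ * t⁻¹ * g * t) * ((h : G)⁻¹ * t⁻¹ * h * t) := by group }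
  have hker : C.subgroupOf H = φ.ker := by
    ext h
    rw [Subgroup.mem_subgroupOf, MonoidHom.mem_ker]
    rw [hCdef, Subgroup.mem_centralizer_singleton_iff]
    constructor
    · intro hx
      ext
      show (h : G)⁻¹ * t⁻¹ * h * t = 1
      rw [show (h : G)⁻¹ * t⁻¹ * h * t = ((t : G) * h)⁻¹ * ((h : G) * t) by group,
        inv_mul_eq_one, hx]
    · intro hx
      have hx' : (h : G)⁻¹ * t⁻¹ * h * t = 1 := congrArg Subtype.val hx
      rw [show (h : G)⁻¹ * t⁻¹ * h * t = ((t : G) * h)⁻¹ * ((h : G) * t) by group,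
        inv_mul_eq_one] at hx'
      exact hx'.symm
  have h3 : C.relIndex H = Nat.card φ.range := by
    rw [Subgroup.relIndex, hker, Subgroup.index_ker]
  have hdvd : C.relIndex H ∣ p ^ k := by
    rw [h3, ← hk]
    exact Subgroup.card_subgroup_dvd_card φ.range
  obtain ⟨m, _, hm⟩ := (Nat.dvd_prime_pow hp).mp hdvd
  exact ⟨m, by rw [h1, hm]⟩
end

section
/- Let G be a finite group, p a prime, Z a subgroup of the center Z(G) whose order is a power of p, and t ∈ G an element whose order is a power of p. Let π : G → G/Z denote the canonical projection. If the index of C_G(t) in its normalizer N_G(C_G(t)) is coprime to p, then π(C_G(t)) = C_{G/Z}(π(t)), i.e. the centralizer of π(t) in G/Z equals C_G(t)/Z. -/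
/-- Let `Z ≤ Z(G)` be a central `p`-subgroup of a finite group `G` and let
`t ∈ G` be a `p`-element. If the index of `C_G(t)` in its normalizer
`N_G(C_G(t))` is coprime to `p`, then the image of `C_G(t)` in `G/Z` equals
the centralizer of the image of `t`, i.e. `C_{G/Z}(tZ) = C_G(t)/Z`. -/
theorem image_centralizer_eq_centralizer_quotient
    (G : Type*) [Group G] [Finite G] (p : ℕ) (hp : p.Prime)
    (Z : Subgroup G) [Z.Normal] (hZle : Z ≤ Subgroup.center G)
    (hZ : IsPGroup p Z)
    (t : G) (ht : ∃ k : ℕ, orderOf t = p ^ k)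
    (hcop : Nat.Coprime
      ((Subgroup.centralizer {t}).relIndex (Subgroup.normalizer (Subgroup.centralizer {t} : Set G))) p) :
    (Subgroup.centralizer {t}).map (QuotientGroup.mk' Z) =
      Subgroup.centralizer {QuotientGroup.mk' Z t} := by
  apply le_antisymm
  · rintro _ ⟨c, hc, rfl⟩
    rw [SetLike.mem_coe, Subgroup.mem_centralizer_singleton_iff] at hc
    rw [Subgroup.mem_centralizer_singleton_iff]
    simp only [QuotientGroup.mk'_apply, ← QuotientGroup.mk_mul, hc]
  · intro x hx
    obtain ⟨g, rfl⟩ := QuotientGroup.mk_surjective x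
    rw [Subgroup.mem_centralizer_singleton_iff] at hx
    simp only [QuotientGroup.mk'_apply, ← QuotientGroup.mk_mul] at hx
    rw [QuotientGroup.eq] at hx
    -- hx : (g * t)⁻¹ * (t * g) ∈ Z
    obtain ⟨z, hzZ, hconj⟩ : ∃ z, z ∈ Z ∧ g⁻¹ * t * g = t * z :=
      ⟨(g * t)⁻¹ * (t * g), hx, by group⟩
    have hzc : ∀ a : G, z * a = a * z := fun a =>
      (Subgroup.mem_center_iff.mp (hZle hzZ) a).symm
    -- z has p-power order
    obtain ⟨k, hk⟩ := hZ ⟨z, hzZ⟩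
    have hzk : z ^ (p ^ k) = 1 := by
      have := congrArg (Subgroup.subtype Z) hk
      simpa using this
    have hzn : ∀ n : ℕ, ∀ a : G, z ^ n * a = a * z ^ n := by
      intro n
      induction n with
      | zero => simp
      | succ n ih =>
        intro a
        rw [pow_succ, mul_assoc, hzc a, ← mul_assoc, ih a, mul_assoc]
    -- conjugation iterates
    have hiter : ∀ n : ℕ, g⁻¹ ^ n * t * g ^ n = t * z ^ n := by
      intro n
      induction n with
      | zero => simp
      | succ n ih =>
        calc g⁻¹ ^ (n+1) * t * g ^ (n+1)
            = g⁻¹ * (g⁻¹ ^ n * t * g ^ n) * g := by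
              rw [pow_succ g, pow_succ' g⁻¹]; simp [mul_assoc]
          _ = g⁻¹ * (t * z ^ n) * g := by rw [ih]
          _ = (g⁻¹ * t * g) * z ^ n := by
              calc g⁻¹ * (t * z ^ n) * g = g⁻¹ * t * (z ^ n * g) := by
                    simp [mul_assoc]
                _ = g⁻¹ * t * (g * z ^ n) := by rw [hzn n g]
                _ = (g⁻¹ * t * g) * z ^ n := by simp [mul_assoc]
          _ = t * z ^ (n+1) := by rw [hconj, pow_succ', mul_assoc]
    -- g^(p^k) centralizes t
    have hgpk : g ^ (p ^ k) ∈ Subgroup.centralizer {t} := by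
      rw [Subgroup.mem_centralizer_singleton_iff]
      have h1 := hiter (p ^ k)
      rw [hzk, mul_one] at h1
      have h2 : t * g ^ (p ^ k) = g ^ (p ^ k) * t :=
        calc t * g ^ (p ^ k)
            = g ^ (p ^ k) * (g⁻¹ ^ (p ^ k) * t * g ^ (p ^ k)) := by
              rw [inv_pow]; simp [mul_assoc]
          _ = g ^ (p ^ k) * t := by rw [h1]
      exact h2.symm
    -- conjugation preserves commuting
    have conj_iff : ∀ a b : G,
        ((g⁻¹ * a * g) * (g⁻¹ * b * g) = (g⁻¹ * b * g) * (g⁻¹ * a * g)) ↔ a * b = b * a := by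
      intro a b
      constructor
      · intro e
        calc a * b = g * ((g⁻¹ * a * g) * (g⁻¹ * b * g)) * g⁻¹ := by group
          _ = g * ((g⁻¹ * b * g) * (g⁻¹ * a * g)) * g⁻¹ := by rw [e]
          _ = b * a := by group
      · intro e
        calc (g⁻¹ * a * g) * (g⁻¹ * b * g) = g⁻¹ * (a * b) * g := by group
          _ = g⁻¹ * (b * a) * g := by rw [e]
          _ = (g⁻¹ * b * g) * (g⁻¹ * a * g) := by group
    -- commuting with t*z iff with t
    have tz_iff : ∀ h : G, h * (t * z) = (t * z) * h ↔ h * t = t * h := by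
      intro h
      constructor
      · intro e
        have e2 : h * t * z = t * h * z := by
          calc h * t * z = h * (t * z) := by rw [mul_assoc]
            _ = (t * z) * h := e
            _ = t * (z * h) := by rw [mul_assoc]
            _ = t * (h * z) := by rw [hzc h]
            _ = t * h * z := by rw [mul_assoc]
        exact mul_right_cancel e2
      · intro e
        calc h * (t * z) = h * t * z := by rw [mul_assoc]
          _ = t * h * z := by rw [e]
          _ = t * (h * z) := by rw [mul_assoc]
          _ = t * (z * h) := by rw [hzc h]
          _ = t * z * h := by rw [mul_assoc]
    -- g normalizes the centralizer
    have hgN : g ∈ Subgroup.normalizer (Subgroup.centralizer {t} : Set G) := by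
      rw [Subgroup.mem_normalizer_iff'']
      intro h
      rw [Subgroup.mem_centralizer_singleton_iff,
        Subgroup.mem_centralizer_singleton_iff]
      constructor
      · intro hh
        have h1 : (g⁻¹ * h * g) * (g⁻¹ * t * g) = (g⁻¹ * t * g) * (g⁻¹ * h * g) :=
          (conj_iff h t).mpr hh
        rw [hconj] at h1
        exact (tz_iff (g⁻¹ * h * g)).mp h1
      · intro hh
        have h1 : (g⁻¹ * h * g) * (t * z) = (t * z) * (g⁻¹ * h * g) :=
          (tz_iff (g⁻¹ * h * g)).mpr hh
        rw [← hconj] at h1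
        exact (conj_iff h t).mp h1
    -- finish via the coprimality in N/C
    have hgC : g ∈ Subgroup.centralizer {t} := by
      set C := Subgroup.centralizer {t} with hCdef
      set N := Subgroup.normalizer (C : Set G) with hNdef
      set C' := C.subgroupOf N with hC'def
      haveI : C'.Normal := Subgroup.normal_in_normalizer
      set gN : N := ⟨g, hgN⟩ with hgNdef
      have hord : (QuotientGroup.mk gN : N ⧸ C') ^ (p ^ k) = 1 := by
        rw [← QuotientGroup.mk_pow, QuotientGroup.eq_one_iff]
        show (gN : N) ^ (p ^ k) ∈ C'
        rw [Subgroup.mem_subgroupOf]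
        simpa using hgpk
      have hdvd1 : orderOf (QuotientGroup.mk gN : N ⧸ C') ∣ p ^ k :=
        orderOf_dvd_of_pow_eq_one hord
      have hdvd2 : orderOf (QuotientGroup.mk gN : N ⧸ C') ∣ C.relIndex N := by
        have hcard : C.relIndex N = Nat.card (N ⧸ C') := by
          rw [Subgroup.relIndex, Subgroup.index_eq_card]
        rw [hcard]
        exact orderOf_dvd_natCard _
      have hone : orderOf (QuotientGroup.mk gN : N ⧸ C') = 1 :=
        Nat.eq_one_of_dvd_coprimes (hcop.pow_right k) hdvd2 hdvd1
      have hone' : (QuotientGroup.mk gN : N ⧸ C') = 1 := orderOf_eq_one_iff.mp hone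
      rw [QuotientGroup.eq_one_iff] at hone'
      exact hone'
    exact ⟨g, hgC, rfl⟩
end

section
/- Let F be a finite field with q elements, p a prime different from the characteristic of F, n ≥ 1 an integer, and let D be an abelian p-subgroup of GL_n(F). Then the determinant map restricted to the centralizer C_{GL_n(F)}(D) of D in GL_n(F) is surjective onto the multiplicative group Fˣ; consequently, the subgroup C_{GL_n(F)}(D) ∩ SL_n(F) has index q − 1 in C_{GL_n(F)}(D), with cyclic quotient of order q − 1. -/
set_option maxHeartbeats 2000000
set_option synthInstance.maxHeartbeats 200000


open Finset in
theorem my_norm_surjective (F E : Type*) [Field F] [Fintype F] [Field E] [Fintype E]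
    [Algebra F E] (u : Fˣ) : ∃ e : Eˣ, Algebra.norm F (e : E) = (u : F) := by
  classical
  set q := Fintype.card F with hq
  set d := Module.finrank F E with hd
  have hd0 : 0 < d := Module.finrank_pos
  have hcardE : Fintype.card E = q ^ d := Module.card_eq_pow_finrank
  have hq1 : 1 < q := Fintype.one_lt_card
  set p := ringChar F with hpdef
  have hpp : p.Prime := CharP.char_is_prime F p
  haveI : Fact p.Prime := ⟨hpp⟩
  haveI : CharP E p := charP_of_injective_algebraMap' F p
  obtain ⟨k, -, hcardF⟩ := FiniteField.card F p
  -- Frobenius as an F-algebra equiv of E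
  have hψ : ∀ x : E, iterateFrobenius E p k x = x ^ q := by
    intro x; rw [iterateFrobenius_def]; conv_rhs => rw [hq, hcardF]
  let φ₀ : E →ₐ[F] E :=
    { toRingHom := iterateFrobenius E p k
      commutes' := fun x => by
        show iterateFrobenius E p k (algebraMap F E x) = algebraMap F E x
        rw [hψ, ← map_pow, FiniteField.pow_card] }
  have hφ₀ : Function.Bijective φ₀ :=
    (Finite.injective_iff_bijective).mp (φ₀.toRingHom.injective)
  let φ : E ≃ₐ[F] E := AlgEquiv.ofBijective φ₀ hφ₀
  have hφ : ∀ x : E, φ x = x ^ q := hψ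
  have hφpow : ∀ (i : ℕ) (x : E), (φ ^ i) x = x ^ q ^ i := by
    intro i
    induction i with
    | zero => intro x; simp
    | succ i ih =>
      intro x
      rw [pow_succ, AlgEquiv.mul_apply, hφ, ih, ← pow_mul, ← pow_succ']
  have hcardGal : Fintype.card (E ≃ₐ[F] E) = d := by rw [← Nat.card_eq_fintype_card]; exact IsGalois.card_aut_eq_finrank F E
  have hφd : φ ^ d = 1 := by
    ext x
    rw [hφpow, AlgEquiv.one_apply, ← hcardE, FiniteField.pow_card]
  have horder : orderOf φ = d := by
    have h1 : orderOf φ ∣ d := orderOf_dvd_of_pow_eq_one hφd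
    have h2 : 0 < orderOf φ := orderOf_pos φ
    refine le_antisymm (Nat.le_of_dvd hd0 h1) ?_
    obtain ⟨g, hg⟩ := IsCyclic.exists_generator (α := Eˣ)
    have hgord : orderOf g = q ^ d - 1 := by
      rw [orderOf_eq_card_of_forall_mem_zpowers hg, Nat.card_eq_fintype_card,
        Fintype.card_units, hcardE]
    have hgt : 1 < q ^ orderOf φ := Nat.one_lt_pow h2.ne' hq1
    have hone : g ^ (q ^ orderOf φ - 1) = 1 := by
      have h3 : (g : E) ^ q ^ orderOf φ = (g : E) := by
        calc (g : E) ^ q ^ orderOf φ = (φ ^ orderOf φ) (g : E) := (hφpow _ _).symm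
          _ = (g : E) := by rw [pow_orderOf_eq_one φ]; rfl
      have h4 : g ^ q ^ orderOf φ = g := Units.ext (by push_cast [h3]; rfl)
      have h5 : g ^ (q ^ orderOf φ - 1) * g = 1 * g := by
        rw [pow_sub_one_mul (by omega) g, h4, one_mul]
      exact mul_right_cancel h5
    have h5 : q ^ d - 1 ∣ q ^ orderOf φ - 1 := hgord ▸ orderOf_dvd_of_pow_eq_one hone
    have h6 : q ^ d - 1 ≤ q ^ orderOf φ - 1 := Nat.le_of_dvd (by omega) h5
    have h8 : 1 ≤ q ^ d := Nat.one_le_pow d q (by omega)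
    have h7 : q ^ d ≤ q ^ orderOf φ := by omega
    exact (Nat.pow_le_pow_iff_right hq1).mp h7
  -- the norm is x ^ m
  set m := ∑ i ∈ range d, q ^ i with hm
  have hmmul : m * (q - 1) = q ^ d - 1 := by
    have hz : (m : ℤ) * ((q : ℤ) - 1) = (q : ℤ) ^ d - 1 := by
      rw [hm]; push_cast; exact geom_sum_mul (q : ℤ) d
    have h8 : 1 ≤ q ^ d := Nat.one_le_pow d q (by omega)
    zify [h8, hq1.le]
    linarith [hz]
  have hm0 : 0 < m := by
    rw [hm]
    exact Finset.sum_pos (fun i _ => pow_pos (by omega) i)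
      (Finset.nonempty_range_iff.mpr hd0.ne')
  have hnorm : ∀ x : E, algebraMap F E (Algebra.norm F x) = x ^ m := by
    intro x
    rw [Algebra.norm_eq_prod_automorphisms]
    have hbij : Function.Bijective (fun i : Fin d => φ ^ (i : ℕ)) := by
      rw [Fintype.bijective_iff_injective_and_card, Fintype.card_fin, hcardGal]
      refine ⟨fun i j hij => ?_, rfl⟩
      have := pow_injOn_Iio_orderOf (x := φ) (show (i:ℕ) ∈ Set.Iio (orderOf φ) by
          simp [horder, i.isLt]) (show (j:ℕ) ∈ Set.Iio (orderOf φ) by simp [horder, j.isLt]) hij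
      exact Fin.ext this
    rw [← Fintype.prod_bijective _ hbij (fun i => _) (fun σ => σ x) (fun i => rfl)]
    simp only [hφpow]
    rw [Finset.prod_pow_eq_pow_sum, hm, Fin.sum_univ_eq_sum_range]
  -- the norm, as a hom on units
  set ν : Eˣ →* Fˣ := Units.map (Algebra.norm F : E →* F) with hν
  have hkercard : Nat.card ν.ker ≤ m := by
    classical
    have hsub : ∀ z : Eˣ, z ∈ ν.ker → z ^ m = 1 := by
      intro z hz
      have h1 : Algebra.norm F (z : E) = 1 := by
        have := congrArg (Units.val) hz
        exact this
      have h2 : (z : E) ^ m = 1 := by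
        rw [← hnorm, h1, map_one]
      exact Units.ext (by push_cast [h2]; rfl)
    have := IsCyclic.card_pow_eq_one_le (α := Eˣ) hm0
    calc Nat.card ν.ker = (Finset.univ.filter fun z : Eˣ => z ∈ ν.ker).card := by
          rw [Nat.card_eq_fintype_card, Fintype.card_subtype]
      _ ≤ (Finset.univ.filter fun z : Eˣ => z ^ m = 1).card :=
          Finset.card_le_card (fun z hz => by
            simp only [Finset.mem_filter, Finset.mem_univ, true_and] at hz ⊢
            exact hsub z hz)
      _ ≤ m := this
  have hcardEu : Nat.card Eˣ = m * (q - 1) := by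
    rw [Nat.card_eq_fintype_card, Fintype.card_units, hcardE, hmmul]
  have hlag : Nat.card ν.range * Nat.card ν.ker = m * (q - 1) := by
    rw [← hcardEu, Nat.card_congr (QuotientGroup.quotientKerEquivRange ν).toEquiv.symm]
    exact (Subgroup.card_eq_card_quotient_mul_card_subgroup ν.ker).symm
  have hrange_le : Nat.card ν.range ≤ q - 1 := by
    have := Subgroup.card_le_card_group ν.range
    rwa [Nat.card_eq_fintype_card (α := Fˣ), Fintype.card_units] at this
  have hker0 : 0 < Nat.card ν.ker := Nat.card_pos
  have hrange_ge : q - 1 ≤ Nat.card ν.range := by nlinarith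
  have hrange : ν.range = ⊤ := by
    apply Subgroup.eq_top_of_card_eq
    rw [Nat.card_eq_fintype_card (α := Fˣ), Fintype.card_units]
    omega
  obtain ⟨e, he⟩ := (Subgroup.eq_top_iff' _).mp hrange u
  exact ⟨e, congrArg Units.val he⟩



theorem simple_det (R F W : Type*) [CommRing R] [Field F] [Fintype F] [Algebra F R]
    [AddCommGroup W] [Module F W] [Module R W] [IsScalarTower F R W] [Finite W]
    [IsSimpleModule R W] (u : Fˣ) :
    ∃ g : W ≃ₗ[R] W,
      LinearMap.det (LinearMap.restrictScalars F (g : W →ₗ[R] W)) = (u : F) := by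
  classical
  haveI := IsSimpleModule.nontrivial R W
  set E := Module.End R W with hE
  haveI : Finite E := Finite.of_injective (fun f : E => (f : W → W))
    (fun f g h => LinearMap.ext (congrFun h))
  -- F-algebra structure on E
  haveI : SMulCommClass F R W := IsScalarTower.to_smulCommClass
  haveI : SMulCommClass R F W := SMulCommClass.symm F R W
  obtain ⟨w, hw⟩ := exists_ne (0 : W)
  -- span of w is everything
  have hspan : Submodule.span R {w} = ⊤ := by
    rcases eq_bot_or_eq_top (Submodule.span R {w}) with h | h
    · exact absurd (h ▸ Submodule.mem_span_singleton_self w) (by simp [hw])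
    · exact h
  have hσ : ∀ x : W, ∃ s : R, s • w = x := by
    intro x
    have hx : x ∈ Submodule.span R {w} := hspan ▸ Submodule.mem_top
    exact Submodule.mem_span_singleton.mp hx
  -- evaluation at w as an F-linear map
  let ev : E →ₗ[F] W :=
    { toFun := fun φ => φ w
      map_add' := fun φ ψ => rfl
      map_smul' := fun c φ => rfl }
  have hev_inj : Function.Injective ev := by
    intro φ ψ h
    ext x
    obtain ⟨r, rfl⟩ := hσ x
    have h2 : φ w = ψ w := h
    simp only [LinearMap.map_smul, h2]
  have hev_surj : Function.Surjective ev := by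
    intro x
    set σ := LinearMap.toSpanSingleton R W w with hσdef
    set τ := LinearMap.toSpanSingleton R W x with hτdef
    have hσ' : Function.Surjective σ := by
      intro y; obtain ⟨s, hs⟩ := hσ y; exact ⟨s, hs⟩
    have hker : LinearMap.ker σ ≤ LinearMap.ker τ := by
      intro r hr
      rw [LinearMap.mem_ker] at hr ⊢
      have hr' : r • w = 0 := hr
      obtain ⟨s, hs⟩ := hσ x
      show r • x = 0
      rw [← hs, smul_comm, hr', smul_zero]
    let q1 : (R ⧸ LinearMap.ker σ) ≃ₗ[R] W := σ.quotKerEquivOfSurjective hσ'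
    let φ : W →ₗ[R] W := ((LinearMap.ker σ).liftQ τ hker) ∘ₗ (q1.symm : W →ₗ[R] R ⧸ LinearMap.ker σ)
    refine ⟨φ, ?_⟩
    show φ w = x
    obtain ⟨r, hr⟩ := Submodule.Quotient.mk_surjective _ (q1.symm w)
    have hq1r : r • w = w := by
      have h0 : q1 (Submodule.Quotient.mk r) = σ r := rfl
      rw [hr] at h0
      rw [LinearEquiv.apply_symm_apply] at h0
      exact h0.symm
    have h1 : φ w = τ r := by
      show ((LinearMap.ker σ).liftQ τ hker) (q1.symm w) = τ r
      rw [← hr, Submodule.liftQ_apply]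
    rw [h1]
    show r • x = x
    obtain ⟨s, hs⟩ := hσ x
    rw [← hs, smul_comm, hq1r]
  let ε : E ≃ₗ[F] W := LinearEquiv.ofBijective ev ⟨hev_inj, hev_surj⟩
  -- determinant of the action of a unit e of E equals its norm
  have hdet : ∀ e : E, LinearMap.det (LinearMap.restrictScalars F e)
      = Algebra.norm F e := by
    intro e
    have key : LinearMap.restrictScalars F e
        = (ε : E →ₗ[F] W) ∘ₗ (Algebra.lmul F E e) ∘ₗ (ε.symm : W →ₗ[F] E) := by
      ext x
      simp only [LinearMap.coe_comp, Function.comp_apply, LinearMap.restrictScalars_apply]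
      show e x = ε (e * ε.symm x)
      have : ε (e * ε.symm x) = (e * ε.symm x : E) w := rfl
      rw [this, Module.End.mul_apply]
      congr 1
      show _ = ev (ε.symm x)
      rw [show (ev (ε.symm x)) = ε (ε.symm x) from rfl, LinearEquiv.apply_symm_apply]
    rw [key, LinearMap.det_conj, Algebra.norm_apply]
  letI : DivisionRing E := Module.End.instDivisionRing
  letI fE : Field E := littleWedderburn E
  letI fintE : Fintype E := Fintype.ofFinite E
  letI aE : @Algebra F E _ fE.toSemiring := by exact Module.End.instAlgebra _ _ _
  obtain ⟨e, he⟩ := @my_norm_surjective F E _ _ fE fintE aE u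
  let g : W ≃ₗ[R] W := LinearEquiv.ofLinear ((e : E) : W →ₗ[R] W) ((↑e⁻¹ : E) : W →ₗ[R] W)
    (by rw [← Module.End.mul_eq_comp]; exact e.mul_inv) (by rw [← Module.End.mul_eq_comp]; exact e.inv_mul)
  refine ⟨g, ?_⟩
  have hg : (g : W →ₗ[R] W) = (e : E) := rfl
  rw [hg, hdet]
  exact he




theorem my_det_prodMap (F M N : Type*) [Field F] [AddCommGroup M] [AddCommGroup N]
    [Module F M] [Module F N] [FiniteDimensional F M] [FiniteDimensional F N]
    (f : M →ₗ[F] M) (g : N →ₗ[F] N) :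
    LinearMap.det (f.prodMap g) = LinearMap.det f * LinearMap.det g := by
  classical
  let b1 := Module.finBasis F M
  let b2 := Module.finBasis F N
  rw [← LinearMap.det_toMatrix (b1.prod b2), LinearMap.toMatrix_prodMap,
    Matrix.det_fromBlocks_zero₂₁, LinearMap.det_toMatrix, LinearMap.det_toMatrix]

/-- Let `F` be a finite field with `q` elements, `p` a prime different from the
characteristic of `F`, and `D` an abelian `p`-subgroup of `GL_n(F)`. Then the
determinant is surjective from the centralizer `C := C_{GL_n(F)}(D)` onto `Fˣ`;
consequently the subgroup `C ∩ SL_n(F)` has index `q - 1` in `C`, and the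
corresponding quotient is cyclic of order `q - 1`. -/
theorem det_surjective_on_centralizer_of_abelian_pSubgroup
    (F : Type*) [Field F] [Fintype F] (q : ℕ) (hq : Fintype.card F = q)
    (p : ℕ) (hp : p.Prime) (hpchar : p ≠ ringChar F)
    (n : ℕ) (hn : 1 ≤ n)
    (D : Subgroup (GL (Fin n) F)) (hDp : IsPGroup p D)
    (hDab : ∀ x ∈ D, ∀ y ∈ D, x * y = y * x)
    (C S : Subgroup (GL (Fin n) F))
    (hC : C = Subgroup.centralizer (D : Set (GL (Fin n) F)))
    (hS : S = MonoidHom.ker (Matrix.GeneralLinearGroup.det : GL (Fin n) F →* Fˣ))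
    [hN : (S.subgroupOf C).Normal] :
    (∀ u : Fˣ, ∃ g ∈ C, Matrix.GeneralLinearGroup.det g = u) ∧
      S.relIndex C = q - 1 ∧
      IsCyclic (C ⧸ S.subgroupOf C) ∧
      Nat.card (C ⧸ S.subgroupOf C) = q - 1 := by
  classical
  haveI : Nonempty (Fin n) := ⟨⟨0, hn⟩⟩
  -- Step 1: surjectivity of det on the centralizer
  have main : ∀ u : Fˣ, ∃ g ∈ C, Matrix.GeneralLinearGroup.det g = u := by
    intro u
    letI commD : CommGroup ↥D :=
      { (inferInstance : Group ↥D) with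
        mul_comm := fun a b => Subtype.ext (hDab a.1 a.2 b.1 b.2) }
    haveI : Fintype ↥D := Fintype.ofFinite ↥D
    have hcardD : ∃ k : ℕ, Fintype.card ↥D = p ^ k := by
      haveI : Fact p.Prime := ⟨hp⟩
      simpa [Nat.card_eq_fintype_card] using (IsPGroup.iff_card).mp hDp
    haveI : NeZero ((Fintype.card ↥D : F)) := by
      obtain ⟨k, hk⟩ := hcardD
      constructor
      rw [hk]
      push_cast
      apply pow_ne_zero
      have hpchar' : ¬ (ringChar F ∣ p) := by
        intro hdvd
        have : ringChar F = p := ((Nat.prime_dvd_prime_iff_eq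
          (CharP.char_is_prime F (ringChar F)) hp).mp hdvd)
        exact hpchar this.symm
      intro h0
      exact hpchar' ((ringChar.spec F p).mp h0)
    set V := (Fin n → F) with hV
    -- the representation of D on V
    let ρ : Representation F ↥D V :=
      (Units.coeHom (Module.End F V)).comp
        ((Matrix.GeneralLinearGroup.toLin (n := Fin n) (R := F)).toMonoidHom.comp D.subtype)
    set R := MonoidAlgebra F ↥D with hR
    let algR : R →ₐ[F] Module.End F V := MonoidAlgebra.lift F (Module.End F V) ↥D ρ
    letI : Module R V := Module.compHom V algR.toRingHom
    haveI : IsScalarTower F R V :=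
      ⟨fun c r v => by
        show algR (c • r) v = c • (algR r v)
        rw [map_smul]
        rfl⟩
    haveI : NeZero ((Nat.card ↥D : F)) := by rw [Nat.card_eq_fintype_card]; infer_instance
    haveI : IsSemisimpleModule R V := inferInstance
    obtain ⟨W, hWsimple⟩ := IsSemisimpleModule.exists_simple_submodule R V
    obtain ⟨W', hcompl⟩ := MonoidAlgebra.Submodule.exists_isCompl W
    haveI := hWsimple
    haveI : IsScalarTower F R ↥W := W.isScalarTower'
    obtain ⟨gW, hdetW⟩ := simple_det R F ↥W u
    let prodE : (↥W × ↥W') ≃ₗ[R] V := Submodule.prodEquivOfIsCompl W W' hcompl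
    let gV : V ≃ₗ[R] V := prodE.symm.trans ((gW.prodCongr (LinearEquiv.refl R ↥W')).trans prodE)
    let gVF : V ≃ₗ[F] V := gV.restrictScalars F
    have hdetV : LinearMap.det (gVF : V →ₗ[F] V) = (u : F) := by
      let e : (↥W × ↥W') ≃ₗ[F] V := prodE.restrictScalars F
      let f : (↥W × ↥W') →ₗ[F] (↥W × ↥W') :=
        LinearMap.prodMap (LinearMap.restrictScalars F (gW : ↥W →ₗ[R] ↥W)) LinearMap.id
      have key : (gVF : V →ₗ[F] V) = (e : (↥W × ↥W') →ₗ[F] V) ∘ₗ f ∘ₗ (e.symm : V →ₗ[F] (↥W × ↥W')) := by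
        apply LinearMap.ext
        intro v
        rfl
      rw [key, LinearMap.det_conj, my_det_prodMap, hdetW, LinearMap.det_id, mul_one]
    -- back to matrices
    let A' : LinearMap.GeneralLinearGroup F V :=
      (LinearMap.GeneralLinearGroup.generalLinearEquiv F V).symm gVF
    let A : GL (Fin n) F := Matrix.GeneralLinearGroup.toLin.symm A'
    refine ⟨A, ?_, ?_⟩
    · rw [hC, Subgroup.mem_centralizer_iff]
      intro y hy
      apply Matrix.GeneralLinearGroup.toLin.injective
      rw [map_mul, map_mul, MulEquiv.apply_symm_apply]
      apply (LinearMap.GeneralLinearGroup.generalLinearEquiv F V).injective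
      rw [map_mul, map_mul, MulEquiv.apply_symm_apply]
      apply LinearEquiv.ext
      intro v
      show (LinearMap.GeneralLinearGroup.generalLinearEquiv F V
            (Matrix.GeneralLinearGroup.toLin y)) (gVF v)
        = gVF ((LinearMap.GeneralLinearGroup.generalLinearEquiv F V
            (Matrix.GeneralLinearGroup.toLin y)) v)
      have hact : ∀ w : V, (LinearMap.GeneralLinearGroup.generalLinearEquiv F V
          (Matrix.GeneralLinearGroup.toLin y)) w = ρ ⟨y, hy⟩ w := fun w => rfl
      have hsmul : ∀ w : V, ρ ⟨y, hy⟩ w = (MonoidAlgebra.of F ↥D ⟨y, hy⟩) • w := by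
        intro w
        show ρ ⟨y, hy⟩ w = algR (MonoidAlgebra.of F ↥D ⟨y, hy⟩) w
        rw [MonoidAlgebra.lift_of]
      rw [hact, hact, hsmul, hsmul]
      show _ • gV v = gV (_ • v)
      rw [map_smul]
    · apply Units.ext
      show Matrix.det (A : Matrix (Fin n) (Fin n) F) = (u : F)
      have hA : (A : Matrix (Fin n) (Fin n) F) = LinearMap.toMatrix' (gVF : V →ₗ[F] V) := rfl
      rw [hA, LinearMap.det_toMatrix']
      exact hdetV
  -- the determinant as a hom on C
  let χ : ↥C →* Fˣ := (Matrix.GeneralLinearGroup.det).comp C.subtype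
  have hχsurj : Function.Surjective χ := by
    intro u
    obtain ⟨g, hg, hdet⟩ := main u
    exact ⟨⟨g, hg⟩, hdet⟩
  have hker : χ.ker = S.subgroupOf C := by
    rw [hS]
    show χ.ker = (MonoidHom.ker Matrix.GeneralLinearGroup.det).comap C.subtype
    rw [MonoidHom.comap_ker]
  let e' : (↥C ⧸ S.subgroupOf C) ≃* Fˣ :=
    (QuotientGroup.quotientMulEquivOfEq hker.symm).trans
      (QuotientGroup.quotientKerEquivOfSurjective χ hχsurj)
  have hcardQ : Nat.card (↥C ⧸ S.subgroupOf C) = q - 1 := by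
    rw [Nat.card_congr e'.toEquiv, Nat.card_eq_fintype_card, Fintype.card_units, hq]
  refine ⟨main, ?_, ?_, hcardQ⟩
  · show (S.subgroupOf C).index = q - 1
    rw [Subgroup.index_eq_card, hcardQ]
  · exact isCyclic_of_surjective e'.symm.toMonoidHom e'.symm.surjective
end

section
/- Let p be an odd prime, q a prime power, and a ≥ 1 an integer such that p^a divides q − 1 but p^{a+1} does not divide q − 1. Let F be the field with q elements, K an algebraic closure of F, and let ξ ∈ Kˣ be an element of multiplicative order p^e for some integer e ≥ 0. Then the degree of the minimal polynomial of ξ over F equals p^{e−a} if e > a, and equals 1 if e ≤ a. -/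
/-!
Since `F⟮ξ⟯` is generated by `ξ` and its Galois group over `F` is cyclic of order
`d = deg minpoly F ξ`, generated by `x ↦ x ^ q`, we have `ξ ^ q ^ n = ξ ↔ d ∣ n`. For `ξ` of
order `p ^ e` the left side says `p ^ e ∣ q ^ n - 1`, and by lifting the exponent
`v_p (q ^ n - 1) = a + v_p n`, so it says `p ^ (e - a) ∣ n`. Hence `d = p ^ (e - a)`.
-/

open IntermediateField

theorem pow_eq_self_iff_orderOf_dvd {G : Type*} [Group G] (g : G) {m : ℕ} (hm : m ≠ 0) :
    g ^ m = g ↔ orderOf g ∣ m - 1 := by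
  rw [orderOf_dvd_iff_pow_eq_one, ← pow_sub_one_mul hm, mul_eq_right]

theorem pow_card_pow_eq_self_iff_natDegree_minpoly_dvd {F K : Type*} [Field F] [Fintype F]
    [Field K] [Algebra F K] {x : K} (hx : IsIntegral F x) (n : ℕ) :
    x ^ Fintype.card F ^ n = x ↔ (minpoly F x).natDegree ∣ n := by
  have : FiniteDimensional F F⟮x⟯ := adjoin.finiteDimensional hx
  have : Finite F⟮x⟯ := Module.finite_of_finite F
  rw [← adjoin.finrank hx, ← FiniteField.orderOf_frobeniusAlgHom, orderOf_dvd_iff_pow_eq_one]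
  constructor
  · intro h
    refine algHom_ext_of_eq_adjoin F rfl fun y (hy : y = x) => ?_
    subst hy
    ext
    simp [AlgHom.coe_pow, FiniteField.coe_frobeniusAlgHom, pow_iterate, h]
  · intro h
    simpa [AlgHom.coe_pow, FiniteField.coe_frobeniusAlgHom, pow_iterate] using
      congr(($h ⟨x, mem_adjoin_simple_self F x⟩ : K))

theorem padicValNat_eq_of_dvd_of_not_dvd {p n a : ℕ} [Fact p.Prime] (hn : n ≠ 0)
    (hdvd : p ^ a ∣ n) (hndvd : ¬ p ^ (a + 1) ∣ n) : padicValNat p n = a := by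
  rw [padicValNat_def hn, multiplicity_eq_of_dvd_of_not_dvd hdvd hndvd]

theorem pow_dvd_pow_sub_one_iff {p q : ℕ} [hp : Fact p.Prime] (hodd : Odd p) (hq : 1 < q)
    (hpq : p ∣ q - 1) {n : ℕ} (hn : n ≠ 0) (e : ℕ) :
    p ^ e ∣ q ^ n - 1 ↔ p ^ (e - padicValNat p (q - 1)) ∣ n := by
  have hpq' : ¬ p ∣ q := fun h => hp.out.not_dvd_one <| by
    simpa [Nat.sub_sub_self hq.le] using Nat.dvd_sub h hpq
  have hlte := padicValNat.pow_sub_pow hodd hq (by simpa using hpq) hpq' hn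
  rw [one_pow] at hlte
  rw [padicValNat_dvd_iff_le (Nat.sub_ne_zero_of_lt (Nat.one_lt_pow hn hq)), hlte,
    padicValNat_dvd_iff_le hn]
  omega

/-- Let `p` be an odd prime, `q` a prime power with `p^a ∥ q - 1` (exact power,
`a ≥ 1`), `F` the field with `q` elements and `K` an algebraic closure of `F`.
If `ξ ∈ Kˣ` has multiplicative order `p^e`, then the degree of the minimal
polynomial of `ξ` over `F` is `p^(e-a)` if `e > a`, and `1` if `e ≤ a`. -/
theorem minpoly_degree_of_p_power_order_element
    (p : ℕ) (hp : p.Prime) (hodd : Odd p)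
    (q a : ℕ) (ha : 1 ≤ a)
    (F : Type*) [Field F] [Fintype F] (hq : Fintype.card F = q)
    (hdvd : p ^ a ∣ q - 1) (hndvd : ¬ p ^ (a + 1) ∣ q - 1)
    (K : Type*) [Field K] [Algebra F K] [IsAlgClosure F K]
    (ξ : Kˣ) (e : ℕ) (hξ : orderOf ξ = p ^ e) :
    (minpoly F (ξ : K)).natDegree = if a < e then p ^ (e - a) else 1 := by
  have : Fact p.Prime := ⟨hp⟩
  have hq1 : 1 < q := hq ▸ Fintype.one_lt_card
  have hval : padicValNat p (q - 1) = a :=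
    padicValNat_eq_of_dvd_of_not_dvd (by omega) hdvd hndvd
  have hint : IsIntegral F (ξ : K) := Algebra.IsIntegral.isIntegral _
  have key : ∀ n ≠ 0, (minpoly F (ξ : K)).natDegree ∣ n ↔ p ^ (e - a) ∣ n := fun n hn => by
    rw [← pow_card_pow_eq_self_iff_natDegree_minpoly_dvd hint, ← Units.val_pow_eq_pow_val,
      Units.val_inj, pow_eq_self_iff_orderOf_dvd _ (pow_ne_zero _ (by omega)), hq, hξ,
      pow_dvd_pow_sub_one_iff hodd hq1 ((dvd_pow_self p (by omega)).trans hdvd) hn, hval]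
  have hdeg : (minpoly F (ξ : K)).natDegree = p ^ (e - a) :=
    Nat.dvd_antisymm ((key _ (pow_ne_zero _ hp.ne_zero)).mpr dvd_rfl)
      ((key _ (minpoly.natDegree_pos hint).ne').mp dvd_rfl)
  rw [hdeg]
  split_ifs with hae
  · rfl
  · rw [Nat.sub_eq_zero_of_le (not_lt.mp hae), pow_zero]
end

section
/- Let p be an odd prime, q a prime power, and a ≥ 1 an integer such that p^a divides q − 1 but p^{a+1} does not divide q − 1. Let F be the field with q elements, n ≥ 1 an integer, and let t ∈ GL_n(F) be an element whose order is a power of p. Then every monic irreducible factor Δ of the minimal polynomial of t over F has degree a power of p; moreover, if Δ has degree p^m with m ≥ 1 then every root of Δ in an algebraic closure of F has multiplicative order p^{a+m}, and if Δ has degree 1 then its root has multiplicative order dividing p^a. -/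
open Finset Polynomial IntermediateField


open Finset

private lemma modEq_sum' {s : Finset ℕ} {f g : ℕ → ℤ} {n : ℤ}
    (h : ∀ i ∈ s, f i ≡ g i [ZMOD n]) :
    (∑ i ∈ s, f i) ≡ ∑ i ∈ s, g i [ZMOD n] := by
  classical
  induction s using Finset.induction with
  | empty => rfl
  | insert a s hni ih =>
    rw [Finset.sum_insert hni, Finset.sum_insert hni]
    exact (h a (Finset.mem_insert_self a s)).add
      (ih fun i hi => h i (Finset.mem_insert_of_mem hi))

private lemma sum_pow_cong (p : ℕ) (hp : p.Prime) (hodd : Odd p) (D : ℤ)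
    (hD : (p:ℤ) ∣ D) : (∑ i ∈ range p, (1+D)^i) ≡ p [ZMOD (p:ℤ)^2] := by
  have h1 : ∀ i : ℕ, (1+D)^i ≡ 1 + i*D [ZMOD D^2] := by
    intro i
    induction i with
    | zero => simp
    | succ i ih =>
      have key : ((1:ℤ) + i*D) * (1+D) ≡ 1 + (↑(i+1))*D [ZMOD D^2] := by
        have e : ((1:ℤ)+i*D)*(1+D) = (1 + (↑(i+1))*D) + i*D^2 := by push_cast; ring
        rw [e]
        have h0 : ((1:ℤ) + (↑(i+1))*D) + i*D^2 ≡ (1 + (↑(i+1))*D) + 0 [ZMOD D^2] :=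
          Int.ModEq.add_left _ ((Int.modEq_zero_iff_dvd).mpr ⟨i, mul_comm _ _⟩)
        simpa using h0
      calc (1+D)^(i+1) = (1+D)^i * (1+D) := by ring
        _ ≡ (1 + i*D) * (1+D) [ZMOD D^2] := ih.mul_right _
        _ ≡ 1 + (↑(i+1))*D [ZMOD D^2] := key
  have h2 : (∑ i ∈ range p, (1+D)^i) ≡ ∑ i ∈ range p, (1 + (i:ℤ)*D) [ZMOD D^2] :=
    modEq_sum' (fun i _ => h1 i)
  have h3 : (∑ i ∈ range p, ((1:ℤ) + (i:ℤ)*D)) = p + (∑ i ∈ range p, (i:ℤ)) * D := by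
    rw [Finset.sum_add_distrib, Finset.sum_mul]
    simp
  have hps : (p:ℤ) ∣ ∑ i ∈ range p, (i:ℤ) := by
    have h2' : (∑ i ∈ range p, (i:ℤ)) * 2 = p * (p-1) := by
      have := congrArg (Nat.cast : ℕ → ℤ) (Finset.sum_range_id_mul_two p)
      push_cast [Nat.cast_sub hp.one_le] at this
      exact this
    have hdvd2 : (p:ℤ) ∣ (∑ i ∈ range p, (i:ℤ)) * 2 := h2' ▸ Dvd.intro _ rfl
    rcases ((Nat.prime_iff_prime_int.mp hp).dvd_or_dvd hdvd2) with h | h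
    · exact h
    · exfalso
      have h2 : p ∣ 2 := by exact_mod_cast h
      have hodd' := Nat.odd_iff.mp hodd
      have := Nat.le_of_dvd (by norm_num) h2
      have := hp.two_le
      omega
  have hsq : (p:ℤ)^2 ∣ D^2 := pow_dvd_pow_of_dvd hD 2
  have h4 : (∑ i ∈ range p, (1+D)^i) ≡ p + (∑ i ∈ range p, (i:ℤ)) * D [ZMOD (p:ℤ)^2] :=
    (h2.of_dvd hsq).trans (by rw [h3])
  have h5 : ((p:ℤ) + (∑ i ∈ range p, (i:ℤ)) * D) ≡ p + 0 [ZMOD (p:ℤ)^2] := by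
    refine Int.ModEq.add_left _ ((Int.modEq_zero_iff_dvd).mpr ?_)
    rw [sq]
    exact mul_dvd_mul hps hD
  exact h4.trans (by simpa using h5)

private lemma stepA (p : ℕ) (hp : p.Prime) {Q : ℤ} {b : ℕ} (hb : 1 ≤ b)
    (h : (p:ℤ)^b ∣ Q - 1) : (p:ℤ)^(b+1) ∣ Q^p - 1 := by
  have hp1 : (p:ℤ) ∣ Q - 1 := dvd_trans (dvd_pow_self _ (by omega)) h
  have hQ1 : Q ≡ 1 [ZMOD (p:ℤ)] := ((Int.modEq_iff_dvd.mpr hp1).symm : Q ≡ 1 [ZMOD (p:ℤ)])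
  have hS : (p:ℤ) ∣ ∑ i ∈ range p, Q^i := by
    have hsum : (∑ i ∈ range p, Q^i) ≡ ∑ i ∈ range p, (1:ℤ) [ZMOD (p:ℤ)] :=
      modEq_sum' (fun i _ => by simpa using hQ1.pow i)
    have h' : (∑ i ∈ range p, Q^i) ≡ (p:ℤ) [ZMOD (p:ℤ)] := by simpa using hsum
    exact (Int.modEq_zero_iff_dvd).mp (h'.trans ((Int.modEq_zero_iff_dvd).mpr dvd_rfl))
  have hm := mul_dvd_mul hS h
  rw [geom_sum_mul] at hm
  calc (p:ℤ)^(b+1) = (p:ℤ) * (p:ℤ)^b := by ring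
    _ ∣ Q^p - 1 := hm

private lemma stepB (p : ℕ) (hp : p.Prime) (hodd : Odd p) {Q : ℤ} {b : ℕ} (hb : 1 ≤ b)
    (h1 : (p:ℤ)^b ∣ Q - 1) (h2 : ¬(p:ℤ)^(b+1) ∣ Q - 1) : ¬(p:ℤ)^(b+2) ∣ Q^p - 1 := by
  intro hcon
  set D : ℤ := Q - 1 with hDdef
  have hD : (p:ℤ) ∣ D := dvd_trans (dvd_pow_self _ (by omega)) h1
  have hQD : Q = 1 + D := by rw [hDdef]; ring
  have hcong : (∑ i ∈ range p, Q^i) ≡ p [ZMOD (p:ℤ)^2] := by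
    rw [hQD]; exact sum_pow_cong p hp hodd D hD
  set S : ℤ := ∑ i ∈ range p, Q^i with hSdef
  have hpS : (p:ℤ) ∣ S := by
    have h' := hcong.of_dvd (dvd_pow_self (p:ℤ) (two_ne_zero))
    exact (Int.modEq_zero_iff_dvd).mp (h'.trans ((Int.modEq_zero_iff_dvd).mpr dvd_rfl))
  have hp2S : ¬ (p:ℤ)^2 ∣ S := by
    intro hc
    have h' : ((p:ℤ)) ≡ 0 [ZMOD (p:ℤ)^2] :=
      (hcong.symm.trans ((Int.modEq_zero_iff_dvd).mpr hc))
    have hd : (p:ℤ)^2 ∣ (p:ℤ) := (Int.modEq_zero_iff_dvd).mp h'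
    have hle := Int.le_of_dvd (by exact_mod_cast hp.pos) hd
    have hge : (2:ℤ) ≤ (p:ℤ) := by exact_mod_cast hp.two_le
    nlinarith
  obtain ⟨e, he⟩ := hpS
  have hpe : ¬ (p:ℤ) ∣ e := fun hc => hp2S (by rw [he, sq]; exact mul_dvd_mul_left _ hc)
  have hfact : Q^p - 1 = (p:ℤ) * (e * D) := by
    rw [← geom_sum_mul, ← hSdef, ← hDdef, he]; ring
  rw [hfact] at hcon
  have hcancel : (p:ℤ)^(b+1) ∣ e * D := by
    have hpne : (p:ℤ) ≠ 0 := by exact_mod_cast hp.ne_zero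
    have h' : (p:ℤ) * (p:ℤ)^(b+1) ∣ (p:ℤ) * (e * D) := by
      calc (p:ℤ) * (p:ℤ)^(b+1) = (p:ℤ)^(b+2) := by ring
        _ ∣ (p:ℤ) * (e * D) := hcon
    exact (mul_dvd_mul_iff_left hpne).mp h'
  exact h2 ((Nat.prime_iff_prime_int.mp hp).pow_dvd_of_dvd_mul_left (b+1) hpe hcancel)

private lemma lteA (p : ℕ) (hp : p.Prime) {a : ℕ} {q : ℤ} (ha : 1 ≤ a)
    (h : (p:ℤ)^a ∣ q - 1) : ∀ m : ℕ, (p:ℤ)^(a+m) ∣ q^(p^m) - 1 := by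
  intro m
  induction m with
  | zero => simpa using h
  | succ m ih =>
    have := stepA p hp (by omega : 1 ≤ a + m) ih
    rw [← pow_mul, ← pow_succ] at this
    exact this

private lemma lteB (p : ℕ) (hp : p.Prime) (hodd : Odd p) {a : ℕ} {q : ℤ} (ha : 1 ≤ a)
    (h : (p:ℤ)^a ∣ q - 1) (hn : ¬ (p:ℤ)^(a+1) ∣ q - 1) :
    ∀ m : ℕ, ¬ (p:ℤ)^(a+m+1) ∣ q^(p^m) - 1 := by
  intro m
  induction m with
  | zero => simpa using hn
  | succ m ih =>
    have := stepB p hp hodd (by omega : 1 ≤ a + m) (lteA p hp ha h m) ih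
    rwa [← pow_mul, ← pow_succ, show a+m+2 = a+(m+1)+1 by ring] at this

private lemma lteC (p : ℕ) (hp : p.Prime) (hodd : Odd p) {a : ℕ} {q : ℤ} (ha : 1 ≤ a)
    (h : (p:ℤ)^a ∣ q - 1) (hn : ¬ (p:ℤ)^(a+1) ∣ q - 1)
    {s j : ℕ} (hs : 1 ≤ s) (hdvd : (p:ℤ)^j ∣ q^s - 1) : j ≤ a + s.factorization p := by
  set i := s.factorization p with hi
  set u := ordCompl[p] s with hu
  have hsu : p^i * u = s := Nat.ordProj_mul_ordCompl_eq_self s p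
  have hpu : ¬ p ∣ u := Nat.not_dvd_ordCompl hp (by omega)
  set Q : ℤ := q^(p^i) with hQ
  have hQ1 : (p:ℤ) ∣ Q - 1 :=
    dvd_trans (dvd_pow_self _ (by omega : a + i ≠ 0)) (lteA p hp ha h i)
  have hgeom : Q^u - 1 = (∑ t ∈ range u, Q^t) * (Q - 1) := (geom_sum_mul Q u).symm
  have hqs : q^s = Q^u := by rw [hQ, ← pow_mul, hsu]
  rw [hqs, hgeom] at hdvd
  have hSmod : (∑ t ∈ range u, Q^t) ≡ (u:ℤ) [ZMOD (p:ℤ)] := by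
    have hQm : Q ≡ 1 [ZMOD (p:ℤ)] := (Int.modEq_iff_dvd.mpr hQ1).symm
    calc (∑ t ∈ range u, Q^t) ≡ ∑ t ∈ range u, (1:ℤ) [ZMOD (p:ℤ)] := by
          clear hgeom hqs hdvd hpu hsu
          induction u with
          | zero => rfl
          | succ u ih =>
            rw [Finset.sum_range_succ, Finset.sum_range_succ]
            exact ih.add (by simpa using hQm.pow u)
      _ ≡ (u:ℤ) [ZMOD (p:ℤ)] := by simp
  have hpS : ¬ (p:ℤ) ∣ (∑ t ∈ range u, Q^t) := by
    intro hc
    have : ((u:ℤ)) ≡ 0 [ZMOD (p:ℤ)] := hSmod.symm.trans (Int.modEq_zero_iff_dvd.mpr hc)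
    have : (p:ℤ) ∣ (u:ℤ) := Int.modEq_zero_iff_dvd.mp this
    exact hpu (by exact_mod_cast this)
  have hQdvd : (p:ℤ)^j ∣ Q - 1 :=
    (Nat.prime_iff_prime_int.mp hp).pow_dvd_of_dvd_mul_left j hpS hdvd
  by_contra hcon
  exact (lteB p hp hodd ha h hn i)
    (dvd_trans (pow_dvd_pow _ (by omega : a + i + 1 ≤ j)) hQdvd)


private lemma orderOf_dvd_pow_card_sub_one (F : Type*) [Field F] [Fintype F]
    (x : AlgebraicClosure F) (hx0 : x ≠ 0) (hint : IsIntegral F x) :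
    orderOf x ∣ Fintype.card F ^ (minpoly F x).natDegree - 1 := by
  haveI : FiniteDimensional F F⟮x⟯ := IntermediateField.adjoin.finiteDimensional hint
  haveI : Finite F⟮x⟯ := Module.finite_of_finite F
  haveI : Fintype F⟮x⟯ := Fintype.ofFinite _
  have hcard : Fintype.card F⟮x⟯ = Fintype.card F ^ (minpoly F x).natDegree := by
    rw [Module.card_eq_pow_finrank (K := F) (V := F⟮x⟯), IntermediateField.adjoin.finrank hint]
  have hpow : x ^ Fintype.card F⟮x⟯ = x := by
    have h1 := congrArg (algebraMap F⟮x⟯ (AlgebraicClosure F))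
      (FiniteField.pow_card (IntermediateField.AdjoinSimple.gen F x))
    rwa [map_pow, IntermediateField.AdjoinSimple.algebraMap_gen] at h1
  have hc1 : 1 ≤ Fintype.card F⟮x⟯ := Fintype.card_pos
  have hone : x ^ (Fintype.card F⟮x⟯ - 1) = 1 := by
    have h2 : x ^ (Fintype.card F⟮x⟯ - 1) * x = 1 * x := by
      rw [one_mul, ← pow_succ, Nat.sub_add_cancel hc1, hpow]
    exact mul_right_cancel₀ hx0 h2
  rw [← hcard]
  exact orderOf_dvd_of_pow_eq_one hone

private lemma minpoly_natDegree_le_of_fixed (F : Type*) [Field F] [Fintype F]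
    (x : AlgebraicClosure F) (hint : IsIntegral F x) {s : ℕ} (hs : 1 ≤ s)
    (hx : x ^ (Fintype.card F ^ s) = x) : (minpoly F x).natDegree ≤ s := by
  classical
  set p' := ringChar F with hp'def
  haveI : CharP F p' := ringChar.charP F
  have hp' : p'.Prime := CharP.char_is_prime F p'
  haveI := Fact.mk hp'
  haveI : CharP (AlgebraicClosure F) p' :=
    charP_of_injective_algebraMap (algebraMap F (AlgebraicClosure F)).injective p'
  obtain ⟨r, rpos, hr⟩ : ∃ r : ℕ, 0 < r ∧ Fintype.card F = p' ^ r := by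
    obtain ⟨⟨r, rpos⟩, -, hcard⟩ := FiniteField.card F p'
    exact ⟨r, rpos, hcard⟩
  have hN : Fintype.card F ^ s = p' ^ (r * s) := by rw [hr, ← pow_mul]
  have key : ∀ y ∈ Algebra.adjoin F ({x} : Set (AlgebraicClosure F)),
      y ^ (Fintype.card F ^ s) = y := by
    intro y hy
    induction hy using Algebra.adjoin_induction with
    | mem z hz => rw [Set.mem_singleton_iff] at hz; rw [hz]; exact hx
    | algebraMap c =>
      rw [← map_pow, FiniteField.pow_card_pow]
    | add u v hu hv hu' hv' => rw [hN] at hu' hv' ⊢; rw [add_pow_char_pow, hu', hv']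
    | mul u v hu hv hu' hv' => rw [mul_pow, hu', hv']
  have hmem : ∀ y : (AlgebraicClosure F), y ∈ F⟮x⟯ → y ^ (Fintype.card F ^ s) = y := by
    intro y hy
    apply key
    rw [← IntermediateField.adjoin_simple_toSubalgebra_of_isAlgebraic hint.isAlgebraic]
    exact hy
  haveI : FiniteDimensional F F⟮x⟯ := IntermediateField.adjoin.finiteDimensional hint
  haveI : Finite F⟮x⟯ := Module.finite_of_finite F
  haveI : Fintype F⟮x⟯ := Fintype.ofFinite _
  have hcard : Fintype.card F⟮x⟯ = Fintype.card F ^ (minpoly F x).natDegree := by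
    rw [Module.card_eq_pow_finrank (K := F) (V := F⟮x⟯), IntermediateField.adjoin.finrank hint]
  set P : (AlgebraicClosure F)[X] := X ^ (Fintype.card F ^ s) - X with hPdef
  have h1q : 1 < Fintype.card F := Fintype.one_lt_card
  have hPne : P ≠ 0 := by
    rw [hPdef, hr, ← pow_mul]
    exact FiniteField.X_pow_card_pow_sub_X_ne_zero _ (Nat.mul_ne_zero (by omega) (by omega)) hp'.one_lt
  have hPdeg : P.natDegree = Fintype.card F ^ s := by
    rw [hPdef, hr, ← pow_mul]
    rw [FiniteField.X_pow_card_pow_sub_X_natDegree_eq _ (Nat.mul_ne_zero (by omega) (by omega)) hp'.one_lt, pow_mul]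
  have hsub : (Finset.univ.image (fun y : F⟮x⟯ => (y : AlgebraicClosure F)))
      ⊆ P.roots.toFinset := by
    intro z hz
    simp only [Finset.mem_image] at hz
    obtain ⟨y, _, rfl⟩ := hz
    rw [Multiset.mem_toFinset, mem_roots']
    refine ⟨hPne, ?_⟩
    have := hmem (y : AlgebraicClosure F) y.2
    simp [hPdef, IsRoot, this]
  have hle : Fintype.card F⟮x⟯ ≤ Fintype.card F ^ s := by
    calc Fintype.card F⟮x⟯
        = (Finset.univ.image (fun y : F⟮x⟯ => (y : AlgebraicClosure F))).card := by
          rw [Finset.card_image_of_injective _ Subtype.val_injective, Finset.card_univ]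
      _ ≤ P.roots.toFinset.card := Finset.card_le_card hsub
      _ ≤ Multiset.card P.roots := Multiset.toFinset_card_le _
      _ ≤ P.natDegree := Polynomial.card_roots' P
      _ = Fintype.card F ^ s := hPdeg
  rw [hcard] at hle
  exact (Nat.pow_le_pow_iff_right h1q).mp hle

/-- Let `p` be an odd prime and `q` a prime power with `p^a ∥ q - 1` (`a ≥ 1`).
Let `F` be the field with `q` elements and let `t ∈ GL_n(F)` be a `p`-element.
Then every monic irreducible factor `Δ` of the minimal polynomial of `t` over
`F` has degree a power `p^m` of `p`; if `m ≥ 1`, every root of `Δ` in an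
algebraic closure of `F` has multiplicative order `p^(a+m)`, and if `m = 0`
(degree one), the root of `Δ` has multiplicative order dividing `p^a`. -/
theorem minpoly_factors_of_p_element_GL
    (p : ℕ) (hp : p.Prime) (hodd : Odd p)
    (q a : ℕ) (ha : 1 ≤ a)
    (F : Type*) [Field F] [Fintype F] (hq : Fintype.card F = q)
    (hdvd : p ^ a ∣ q - 1) (hndvd : ¬ p ^ (a + 1) ∣ q - 1)
    (n : ℕ) (hn : 1 ≤ n) (t : GL (Fin n) F)
    (ht : ∃ k : ℕ, orderOf t = p ^ k)
    (Δ : Polynomial F) (hmonic : Δ.Monic) (hirr : Irreducible Δ)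
    (hfac : Δ ∣ minpoly F (t : Matrix (Fin n) (Fin n) F)) :
    ∃ m : ℕ, Δ.natDegree = p ^ m ∧
      (1 ≤ m → ∀ x : AlgebraicClosure F, Polynomial.aeval x Δ = 0 →
        orderOf x = p ^ (a + m)) ∧
      (m = 0 → ∀ x : AlgebraicClosure F, Polynomial.aeval x Δ = 0 →
        orderOf x ∣ p ^ a) := by
  classical
  obtain ⟨k, hk⟩ := ht
  have hq2 : 1 < q := hq ▸ Fintype.one_lt_card
  have hq1 : ∀ s : ℕ, 1 ≤ q ^ s := fun s => Nat.one_le_pow _ _ (by omega)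
  -- cast helpers
  have hcast : ∀ s : ℕ, ((q ^ s - 1 : ℕ) : ℤ) = (q:ℤ)^s - 1 := by
    intro s
    rw [Nat.cast_sub (hq1 s)]
    push_cast; ring
  have hdvdcast : ∀ u s : ℕ, (p ^ u ∣ q ^ s - 1 ↔ (p:ℤ)^u ∣ (q:ℤ)^s - 1) := by
    intro u s
    rw [← hcast s, ← Nat.cast_pow, Int.natCast_dvd_natCast]
  have hdvdZ : (p:ℤ)^a ∣ (q:ℤ) - 1 := by
    have := (hdvdcast a 1).mp (by simpa using hdvd)
    simpa using this
  have hndvdZ : ¬ (p:ℤ)^(a+1) ∣ (q:ℤ) - 1 := by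
    intro hcon
    exact hndvd (by simpa using (hdvdcast (a+1) 1).mpr (by simpa using hcon))
  -- the matrix satisfies X^(p^k) = 1
  set N := p ^ k with hN
  have hNpos : 0 < N := Nat.pow_pos hp.pos
  have hM : (t : Matrix (Fin n) (Fin n) F) ^ N = 1 := by
    have h1 : t ^ N = 1 := hk ▸ pow_orderOf_eq_one t
    have := congrArg Units.val h1
    simpa using this
  have hmindvd : minpoly F (t : Matrix (Fin n) (Fin n) F) ∣ (X ^ N - 1 : F[X]) := by
    apply minpoly.dvd
    rw [map_sub, map_pow, aeval_X, map_one, hM, sub_self]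
  have hΔdvd : Δ ∣ (X ^ N - 1 : F[X]) := hfac.trans hmindvd
  have hrootpow : ∀ x : AlgebraicClosure F, Polynomial.aeval x Δ = 0 → x ^ N = 1 := by
    intro x hx
    obtain ⟨c, hc⟩ := hΔdvd
    have h0 : Polynomial.aeval x (X ^ N - 1 : F[X]) = 0 := by rw [hc, map_mul, hx, zero_mul]
    rw [map_sub, map_pow, aeval_X, map_one, sub_eq_zero] at h0
    exact h0
  have hx0 : ∀ x : AlgebraicClosure F, Polynomial.aeval x Δ = 0 → x ≠ 0 := by
    intro x hx hc
    have := hrootpow x hx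
    rw [hc, zero_pow hNpos.ne'] at this
    exact zero_ne_one this
  have hdeg1 : 1 ≤ Δ.natDegree := hirr.natDegree_pos
  -- for each root
  have hmx : ∀ x : AlgebraicClosure F, Polynomial.aeval x Δ = 0 → minpoly F x = Δ :=
    fun x hx => (minpoly.eq_of_irreducible_of_monic hirr hx hmonic).symm
  have hint : ∀ x : AlgebraicClosure F, Polynomial.aeval x Δ = 0 → IsIntegral F x :=
    fun x hx => ⟨Δ, hmonic, hx⟩
  have hE : ∀ x : AlgebraicClosure F, Polynomial.aeval x Δ = 0 →
      orderOf x ∣ q ^ Δ.natDegree - 1 := by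
    intro x hx
    have := orderOf_dvd_pow_card_sub_one F x (hx0 x hx) (hint x hx)
    rwa [hmx x hx, hq] at this
  have hFdeg : ∀ x : AlgebraicClosure F, Polynomial.aeval x Δ = 0 → ∀ s : ℕ, 1 ≤ s →
      orderOf x ∣ q ^ s - 1 → Δ.natDegree ≤ s := by
    intro x hx s hs hdx
    have hpow1 : x ^ (q ^ s - 1) = 1 := orderOf_dvd_iff_pow_eq_one.mp hdx
    have hfix : x ^ (Fintype.card F ^ s) = x := by
      rw [hq]
      calc x ^ (q^s) = x ^ (q^s - 1 + 1) := by rw [Nat.sub_add_cancel (hq1 s)]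
        _ = x ^ (q^s - 1) * x := by rw [pow_succ]
        _ = x := by rw [hpow1, one_mul]
    have := minpoly_natDegree_le_of_fixed F x (hint x hx) hs hfix
    rwa [hmx x hx] at this
  have hordj : ∀ x : AlgebraicClosure F, Polynomial.aeval x Δ = 0 →
      ∃ j : ℕ, orderOf x = p ^ j := by
    intro x hx
    have hd : orderOf x ∣ N := orderOf_dvd_of_pow_eq_one (hrootpow x hx)
    obtain ⟨j, -, hj⟩ := (Nat.dvd_prime_pow hp).mp (hN ▸ hd)
    exact ⟨j, hj⟩
  -- pick a root
  obtain ⟨x₀, hx₀⟩ := IsAlgClosed.exists_aeval_eq_zero (AlgebraicClosure F) Δ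
    (Polynomial.natDegree_pos_iff_degree_pos.mp hdeg1).ne'
  obtain ⟨j₀, hj₀⟩ := hordj x₀ hx₀
  -- generic fact: any root x with orderOf x = p^j satisfies p^j ∣ q^deg - 1
  have hEj : ∀ x : AlgebraicClosure F, Polynomial.aeval x Δ = 0 → ∀ j : ℕ,
      orderOf x = p ^ j → (p:ℤ)^j ∣ (q:ℤ)^Δ.natDegree - 1 := by
    intro x hx j hj
    exact (hdvdcast j Δ.natDegree).mp (hj ▸ hE x hx)
  by_cases hja : j₀ ≤ a
  · -- degree 1 case
    have hdegle : Δ.natDegree ≤ 1 := by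
      apply hFdeg x₀ hx₀ 1 le_rfl
      rw [hj₀, pow_one]
      exact dvd_trans (pow_dvd_pow p hja) hdvd
    have hdeg : Δ.natDegree = 1 := le_antisymm hdegle hdeg1
    refine ⟨0, by rw [hdeg, pow_zero], fun h => absurd h (by omega), fun _ x hx => ?_⟩
    obtain ⟨j, hj⟩ := hordj x hx
    have hEx : (p:ℤ)^j ∣ (q:ℤ) - 1 := by
      have := hEj x hx j hj
      rwa [hdeg, pow_one] at this
    have hjle : j ≤ a := by
      by_contra hcon
      exact hndvdZ (dvd_trans (pow_dvd_pow _ (by omega : a + 1 ≤ j)) hEx)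
    rw [hj]
    exact pow_dvd_pow p hjle
  · -- j₀ > a : degree p^m with m = j₀ - a ≥ 1
    push_neg at hja
    set m := j₀ - a with hm
    have hm1 : 1 ≤ m := by omega
    have ham : a + m = j₀ := by omega
    -- p^m ∣ deg
    have hpmdvd : p ^ m ∣ Δ.natDegree := by
      have hle := lteC p hp hodd ha hdvdZ hndvdZ hdeg1 (hEj x₀ hx₀ j₀ hj₀)
      refine dvd_trans (pow_dvd_pow p (by omega : m ≤ Δ.natDegree.factorization p)) ?_
      exact Nat.ordProj_dvd _ _
    -- deg ≤ p^m
    have hdegle : Δ.natDegree ≤ p ^ m := by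
      apply hFdeg x₀ hx₀ (p ^ m) (Nat.one_le_pow _ _ hp.pos)
      rw [hj₀]
      exact (hdvdcast j₀ (p^m)).mpr (ham ▸ lteA p hp ha hdvdZ m)
    have hdeg : Δ.natDegree = p ^ m :=
      le_antisymm hdegle (Nat.le_of_dvd (by omega) hpmdvd)
    refine ⟨m, hdeg, fun _ x hx => ?_, fun h0 => absurd h0 (by omega)⟩
    obtain ⟨j, hj⟩ := hordj x hx
    have hEx : (p:ℤ)^j ∣ (q:ℤ)^(p^m) - 1 := by
      have := hEj x hx j hj
      rwa [hdeg] at this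
    have hjle : j ≤ a + m := by
      by_contra hcon
      exact (lteB p hp hodd ha hdvdZ hndvdZ m)
        (dvd_trans (pow_dvd_pow _ (by omega : a + m + 1 ≤ j)) hEx)
    have hjge : a + m ≤ j := by
      by_contra hcon
      push_neg at hcon
      by_cases hja' : j ≤ a
      · -- deg ≤ 1 < p^m, contradiction
        have : Δ.natDegree ≤ 1 := by
          apply hFdeg x hx 1 le_rfl
          rw [hj, pow_one]
          exact dvd_trans (pow_dvd_pow p hja') hdvd
        have hplt : 1 < p ^ m := by
          calc 1 < p := hp.one_lt
            _ ≤ p ^ m := Nat.le_self_pow (by omega) p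
        omega
      · push_neg at hja'
        have hsm : j - a < m := by omega
        have : Δ.natDegree ≤ p ^ (j - a) := by
          apply hFdeg x hx (p ^ (j-a)) (Nat.one_le_pow _ _ hp.pos)
          rw [hj]
          have := lteA p hp ha hdvdZ (j - a)
          rw [show a + (j - a) = j by omega] at this
          exact (hdvdcast j (p^(j-a))).mpr this
        have hplt : p ^ (j - a) < p ^ m := Nat.pow_lt_pow_right hp.one_lt hsm
        omega
    rw [hj, show j = a + m by omega]
end

section
/- Let p be an odd prime, a ≥ 1 an integer, and ε ∈ {1, −1}. Then there exist a prime r and a positive integer m such that, setting q := r^m, the integer p^a divides q − ε and p^{a+1} does not divide q − ε. -/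
/-!
Since `a ≥ 1`, the residue `ε + p^a` is coprime to `p^(a+1)`, so by Dirichlet's theorem there is
a prime `r ≡ ε + p^a (mod p^(a+1))`. Then `r - ε ≡ p^a (mod p^(a+1))`, which is divisible by
`p^a` but not by `p^(a+1)`; take `m = 1`.
-/

theorem Int.dvd_sub_iff_dvd_of_modEq_add {n c x y : ℤ} (h : x ≡ y + c [ZMOD n]) :
    n ∣ x - y ↔ n ∣ c := by
  rw [show x - y = (x - (y + c)) + c by ring]
  exact dvd_add_right h.symm.dvd

theorem Int.pow_dvd_sub_and_not_pow_succ_dvd_of_modEq_add_pow {p : ℕ} (hp : 1 < p) {a : ℕ}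
    {x y : ℤ} (h : x ≡ y + (p : ℤ) ^ a [ZMOD (p : ℤ) ^ (a + 1)]) :
    (p : ℤ) ^ a ∣ x - y ∧ ¬ (p : ℤ) ^ (a + 1) ∣ x - y := by
  refine ⟨(dvd_sub_iff_dvd_of_modEq_add (h.of_dvd (pow_dvd_pow _ a.le_succ))).mpr dvd_rfl, ?_⟩
  rw [dvd_sub_iff_dvd_of_modEq_add h]
  exact_mod_cast (Nat.pow_dvd_pow_iff_le_right hp).not.mpr (by omega)

theorem IsCoprime.unit_add_pow {R : Type*} [CommRing R] {u : R} (hu : IsUnit u) (p : R)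
    {a : ℕ} (ha : a ≠ 0) (b : ℕ) : IsCoprime (u + p ^ a) (p ^ b) := by
  have hup : IsCoprime u p := isCoprime_one_left.of_isCoprime_of_dvd_left hu.dvd
  rw [← Nat.succ_pred_eq_of_ne_zero ha, pow_succ']
  exact (hup.add_mul_left_left _).pow_right

theorem exists_prime_power_with_exact_p_adic_condition_general
    (p : ℕ) (hp : p.Prime) (a : ℕ) (ha : 1 ≤ a)
    (ε : ℤ) (hε : ε = 1 ∨ ε = -1) :
    ∃ (r m : ℕ), r.Prime ∧ 0 < m ∧
      (p : ℤ) ^ a ∣ (r : ℤ) ^ m - ε ∧ ¬ (p : ℤ) ^ (a + 1) ∣ (r : ℤ) ^ m - ε := by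
  have hcop : IsCoprime (ε + (p : ℤ) ^ a) ((p ^ (a + 1) : ℕ) : ℤ) := by
    push_cast
    exact .unit_add_pow (Int.isUnit_iff.mpr hε) _ (by omega) _
  obtain ⟨r, -, hr, hrε⟩ :=
    Nat.forall_exists_prime_gt_and_zmodEq 0 (pow_ne_zero _ hp.ne_zero) hcop
  push_cast at hrε
  refine ⟨r, 1, hr, one_pos, ?_⟩
  simpa only [pow_one] using Int.pow_dvd_sub_and_not_pow_succ_dvd_of_modEq_add_pow hp.one_lt hrε

/-- Let `p` be an odd prime, `a ≥ 1` an integer and `ε ∈ {1, -1}`. Then there is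
a prime `r` and a positive integer `m` such that, with `q := r ^ m`, one has
`p^a ∣ q - ε` and `p^(a+1) ∤ q - ε` (computed in the integers). -/
theorem exists_prime_power_with_exact_p_adic_condition
    (p : ℕ) (hp : p.Prime) (hodd : Odd p) (a : ℕ) (ha : 1 ≤ a)
    (ε : ℤ) (hε : ε = 1 ∨ ε = -1) :
    ∃ (r m : ℕ), r.Prime ∧ 0 < m ∧
      (p : ℤ) ^ a ∣ (r : ℤ) ^ m - ε ∧ ¬ (p : ℤ) ^ (a + 1) ∣ (r : ℤ) ^ m - ε :=
  exists_prime_power_with_exact_p_adic_condition_general p hp a ha ε hε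
end

section
/- Let l ≥ 3 be an integer. The number of subsets A of {1, 2, …, l−1} satisfying at least one of the following three conditions equals l(l+1)/2 − 2: (i) A is an interval (possibly empty); (ii) A = {x ∈ ℤ : a ≤ x ≤ l−1, x ≠ l−a} for some integer a with 1 ≤ a and 2a ≤ l; (iii) A = {l−a} ∪ {x ∈ ℤ : a ≤ x ≤ l−1} for some integer a with l < 2a and a ≤ l−1. -/
/-- The set `S_a = {x : a ≤ x ≤ l-1, x ≠ l-a}` (for `1 ≤ a`, `2a ≤ l`). -/
def Sset (l a : ℕ) : Set ℕ := {x : ℕ | a ≤ x ∧ x ≤ l - 1 ∧ x ≠ l - a}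

/-- The set `T_a = {l-a} ∪ {x : a ≤ x ≤ l-1}` (for `l < 2a`, `a ≤ l-1`). -/
def Tset (l a : ℕ) : Set ℕ := insert (l - a) {x : ℕ | a ≤ x ∧ x ≤ l - 1}

/-- A subset of `{1, …, l-1}` is an interval if it is order-convex. -/
def IsIntervalSet (l : ℕ) (A : Set ℕ) : Prop :=
  A ⊆ Set.Icc 1 (l - 1) ∧
    ∀ x ∈ A, ∀ z ∈ A, ∀ y : ℕ, x ≤ y → y ≤ z → y ∈ A

noncomputable instance : DecidableEq (Set ℕ) := Classical.decEq _

lemma mem_Sset {l a x : ℕ} : x ∈ Sset l a ↔ a ≤ x ∧ x ≤ l - 1 ∧ x ≠ l - a := Iff.rfl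

lemma mem_Tset {l a x : ℕ} : x ∈ Tset l a ↔ x = l - a ∨ (a ≤ x ∧ x ≤ l - 1) := by
  simp [Tset, Set.mem_insert_iff, Set.mem_setOf_eq]

noncomputable def F1 (l : ℕ) : Finset (Set ℕ) :=
  (Finset.Icc 1 (l-1)).biUnion (fun a => (Finset.Icc a (l-1)).image (fun b => Set.Icc a b))

noncomputable def F2 (l : ℕ) : Finset (Set ℕ) := (Finset.Icc 2 ((l-1)/2)).image (Sset l)

noncomputable def F3 (l : ℕ) : Finset (Set ℕ) := (Finset.Icc ((l+3)/2) (l-1)).image (Tset l)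

lemma mem_F1 {l : ℕ} {A : Set ℕ} :
    A ∈ F1 l ↔ ∃ a b : ℕ, 1 ≤ a ∧ a ≤ b ∧ b ≤ l - 1 ∧ A = Set.Icc a b := by
  simp only [F1, Finset.mem_biUnion, Finset.mem_image, Finset.mem_Icc]
  constructor
  · rintro ⟨a, ⟨h1, _⟩, b, ⟨h3, h4⟩, rfl⟩
    exact ⟨a, b, h1, h3, h4, rfl⟩
  · rintro ⟨a, b, h1, h3, h4, rfl⟩
    exact ⟨a, ⟨h1, le_trans h3 h4⟩, b, ⟨h3, h4⟩, rfl⟩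

lemma mem_F2 {l : ℕ} {A : Set ℕ} :
    A ∈ F2 l ↔ ∃ a : ℕ, 2 ≤ a ∧ 2*a ≤ l - 1 ∧ A = Sset l a := by
  simp only [F2, Finset.mem_image, Finset.mem_Icc]
  constructor
  · rintro ⟨a, ⟨h1, h2⟩, rfl⟩; exact ⟨a, h1, by omega, rfl⟩
  · rintro ⟨a, h1, h2, rfl⟩; exact ⟨a, ⟨h1, by omega⟩, rfl⟩

lemma mem_F3 {l : ℕ} {A : Set ℕ} :
    A ∈ F3 l ↔ ∃ a : ℕ, l + 2 ≤ 2*a ∧ a ≤ l - 1 ∧ A = Tset l a := by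
  simp only [F3, Finset.mem_image, Finset.mem_Icc]
  constructor
  · rintro ⟨a, ⟨h1, h2⟩, rfl⟩; exact ⟨a, by omega, h2, rfl⟩
  · rintro ⟨a, h1, h2, rfl⟩; exact ⟨a, ⟨by omega, h2⟩, rfl⟩

lemma icc_inj {a b c d : ℕ} (hab : a ≤ b) (hcd : c ≤ d)
    (h : Set.Icc a b = Set.Icc c d) : a = c ∧ b = d := by
  have h1 : a ∈ Set.Icc c d := h ▸ Set.mem_Icc.2 ⟨le_rfl, hab⟩
  have h2 : b ∈ Set.Icc c d := h ▸ Set.mem_Icc.2 ⟨hab, le_rfl⟩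
  have h3 : c ∈ Set.Icc a b := h.symm ▸ Set.mem_Icc.2 ⟨le_rfl, hcd⟩
  have h4 : d ∈ Set.Icc a b := h.symm ▸ Set.mem_Icc.2 ⟨hcd, le_rfl⟩
  rw [Set.mem_Icc] at h1 h2 h3 h4
  omega

lemma Icc_ne_Sset {l a b c : ℕ} (hc1 : 2 ≤ c) (hc2 : 2*c ≤ l-1) :
    Set.Icc a b ≠ Sset l c := by
  intro h
  have h1 : c ∈ Set.Icc a b := h.symm ▸ mem_Sset.2 ⟨le_rfl, by omega, by omega⟩
  have h2 : l - c + 1 ∈ Set.Icc a b := h.symm ▸ mem_Sset.2 ⟨by omega, by omega, by omega⟩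
  rw [Set.mem_Icc] at h1 h2
  have h3 : l - c ∈ Set.Icc a b := Set.mem_Icc.2 ⟨by omega, by omega⟩
  rw [h, mem_Sset] at h3
  omega

lemma Icc_ne_Tset {l a b c : ℕ} (hl : 3 ≤ l) (hc1 : l+2 ≤ 2*c) (hc2 : c ≤ l-1) :
    Set.Icc a b ≠ Tset l c := by
  intro h
  have h1 : l - c ∈ Set.Icc a b := h.symm ▸ mem_Tset.2 (Or.inl rfl)
  have h2 : c ∈ Set.Icc a b := h.symm ▸ mem_Tset.2 (Or.inr ⟨le_rfl, hc2⟩)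
  rw [Set.mem_Icc] at h1 h2
  have h3 : c - 1 ∈ Set.Icc a b := Set.mem_Icc.2 ⟨by omega, by omega⟩
  rw [h, mem_Tset] at h3
  omega

lemma Sset_ne_Tset {l c d : ℕ} (hl : 3 ≤ l) (hc1 : 2 ≤ c) (hc2 : 2*c ≤ l-1)
    (hd1 : l+2 ≤ 2*d) (hd2 : d ≤ l-1) : Sset l c ≠ Tset l d := by
  intro h
  have hcS : c ∈ Tset l d := h ▸ mem_Sset.2 ⟨le_rfl, by omega, by omega⟩
  rw [mem_Tset] at hcS
  have hcd : c = l - d := by rcases hcS with h' | h' <;> omega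
  have hc1S : c + 1 ∈ Tset l d := h ▸ mem_Sset.2 ⟨by omega, by omega, by omega⟩
  rw [mem_Tset] at hc1S
  omega

lemma interval_eq {l : ℕ} {A : Set ℕ} (h : IsIntervalSet l A) (hne : A.Nonempty) :
    ∃ a b : ℕ, 1 ≤ a ∧ a ≤ b ∧ b ≤ l - 1 ∧ A = Set.Icc a b := by
  obtain ⟨hsub, hconv⟩ := h
  have hbdd : BddAbove A := BddAbove.mono hsub bddAbove_Icc
  have hinf : sInf A ∈ A := Nat.sInf_mem hne
  have hsup : sSup A ∈ A := Nat.sSup_mem hne hbdd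
  have h1 := hsub hinf
  have h2 := hsub hsup
  rw [Set.mem_Icc] at h1 h2
  refine ⟨sInf A, sSup A, h1.1, ?_, h2.2, ?_⟩
  · exact le_csSup hbdd hinf
  · ext x
    constructor
    · intro hx
      exact Set.mem_Icc.2 ⟨Nat.sInf_le hx, le_csSup hbdd hx⟩
    · intro hx
      rw [Set.mem_Icc] at hx
      exact hconv _ hinf _ hsup x hx.1 hx.2

lemma F1_card {l : ℕ} (hl : 3 ≤ l) : (F1 l).card = l*(l-1)/2 := by
  rw [F1, Finset.card_biUnion]
  · have hc : ∀ a ∈ Finset.Icc 1 (l-1),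
        ((Finset.Icc a (l-1)).image (fun b => Set.Icc a b)).card = l - a := by
      intro a ha
      rw [Finset.mem_Icc] at ha
      rw [Finset.card_image_of_injOn, Nat.card_Icc]
      · omega
      · intro b hb b' hb' hbb
        simp only [Finset.mem_coe, Finset.mem_Icc] at hb hb'
        exact ((icc_inj hb.1 hb'.1 hbb).2)
    rw [Finset.sum_congr rfl hc]
    have h2 : ∑ a ∈ Finset.Icc 1 (l-1), (l - a) = ∑ a ∈ Finset.Icc 1 (l-1), a := by
      refine Finset.sum_nbij' (fun a => l - a) (fun a => l - a) ?_ ?_ ?_ ?_ ?_ <;>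
        intro a ha <;> rw [Finset.mem_Icc] at ha <;> (try simp only [Finset.mem_Icc]) <;> omega
    rw [h2]
    have h3 : ∑ a ∈ Finset.Icc 1 (l-1), a = ∑ a ∈ Finset.range l, a := by
      apply Finset.sum_subset
      · intro x hx
        rw [Finset.mem_Icc] at hx
        rw [Finset.mem_range]; omega
      · intro x hxr hx
        rw [Finset.mem_range] at hxr
        rw [Finset.mem_Icc] at hx
        omega
    rw [h3]
    have h4 := Finset.sum_range_id_mul_two l
    omega
  · intro a ha a' ha' hne
    simp only [Finset.disjoint_left, Finset.mem_image, Finset.mem_Icc]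
    rintro A ⟨b, ⟨hb1, hb2⟩, rfl⟩ ⟨b', ⟨hb1', hb2'⟩, hA⟩
    exact hne ((icc_inj hb1' hb1 hA).1).symm

/-- For `l ≥ 3`, the number of subsets `A ⊆ {1, …, l-1}` that are an interval,
or of the form `S_a` (`1 ≤ a`, `2a ≤ l`), or of the form `T_a`
(`l < 2a`, `a ≤ l-1`), equals `l(l+1)/2 - 2`. -/
theorem card_intervals_or_ST_eq (l : ℕ) (hl : 3 ≤ l) :
    Set.ncard {A : Set ℕ | A ⊆ Set.Icc 1 (l - 1) ∧
      (IsIntervalSet l A ∨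
        (∃ a : ℕ, 1 ≤ a ∧ 2 * a ≤ l ∧ A = Sset l a) ∨
        (∃ a : ℕ, l < 2 * a ∧ a ≤ l - 1 ∧ A = Tset l a))} =
      l * (l + 1) / 2 - 2 := by
  classical
  have hset : {A : Set ℕ | A ⊆ Set.Icc 1 (l - 1) ∧
      (IsIntervalSet l A ∨
        (∃ a : ℕ, 1 ≤ a ∧ 2 * a ≤ l ∧ A = Sset l a) ∨
        (∃ a : ℕ, l < 2 * a ∧ a ≤ l - 1 ∧ A = Tset l a))}
      = ↑(insert (∅ : Set ℕ) (F1 l ∪ F2 l ∪ F3 l)) := by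
    ext A
    simp only [Set.mem_setOf_eq, Finset.coe_insert, Set.mem_insert_iff, Finset.coe_union,
      Set.mem_union, Finset.mem_coe]
    constructor
    · rintro ⟨hsub, hA | hA | hA⟩
      · rcases Set.eq_empty_or_nonempty A with rfl | hne
        · exact Or.inl rfl
        · exact Or.inr (Or.inl (Or.inl (mem_F1.2 (interval_eq hA hne))))
      · obtain ⟨a, ha1, ha2, rfl⟩ := hA
        by_cases hc1 : a = 1
        · subst hc1
          refine Or.inr (Or.inl (Or.inl (mem_F1.2 ⟨1, l-2, le_rfl, by omega, by omega, ?_⟩)))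
          ext x; rw [mem_Sset, Set.mem_Icc]; omega
        · by_cases hc2 : 2*a = l
          · refine Or.inr (Or.inl (Or.inl (mem_F1.2 ⟨a+1, l-1, by omega, by omega, le_rfl, ?_⟩)))
            ext x; rw [mem_Sset, Set.mem_Icc]; omega
          · exact Or.inr (Or.inl (Or.inr (mem_F2.2 ⟨a, by omega, by omega, rfl⟩)))
      · obtain ⟨a, ha1, ha2, rfl⟩ := hA
        by_cases hc : 2*a = l+1
        · refine Or.inr (Or.inl (Or.inl (mem_F1.2 ⟨a-1, l-1, by omega, by omega, le_rfl, ?_⟩)))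
          ext x; rw [mem_Tset, Set.mem_Icc]; omega
        · exact Or.inr (Or.inr (mem_F3.2 ⟨a, by omega, ha2, rfl⟩))
    · rintro (rfl | ((hA | hA) | hA))
      · exact ⟨Set.empty_subset _, Or.inl ⟨Set.empty_subset _,
          fun x hx => absurd hx (Set.notMem_empty x)⟩⟩
      · obtain ⟨a, b, h1, h2, h3, rfl⟩ := mem_F1.1 hA
        refine ⟨fun x hx => ?_, Or.inl ⟨fun x hx => ?_, ?_⟩⟩
        · rw [Set.mem_Icc] at *; omega
        · rw [Set.mem_Icc] at *; omega
        · intro x hx z hz y hxy hyz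
          rw [Set.mem_Icc] at *; omega
      · obtain ⟨a, h1, h2, rfl⟩ := mem_F2.1 hA
        refine ⟨fun x hx => ?_, Or.inr (Or.inl ⟨a, by omega, by omega, rfl⟩)⟩
        rw [mem_Sset] at hx; rw [Set.mem_Icc]; omega
      · obtain ⟨a, h1, h2, rfl⟩ := mem_F3.1 hA
        refine ⟨fun x hx => ?_, Or.inr (Or.inr ⟨a, by omega, h2, rfl⟩)⟩
        rw [mem_Tset] at hx; rw [Set.mem_Icc]; omega
  rw [hset, Set.ncard_coe_finset]
  have hnotmem : (∅ : Set ℕ) ∉ F1 l ∪ F2 l ∪ F3 l := by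
    intro h
    rcases Finset.mem_union.1 h with h' | h'
    · rcases Finset.mem_union.1 h' with h'' | h''
      · obtain ⟨a, b, h1, h2, h3, hA⟩ := mem_F1.1 h''
        have : a ∈ (∅ : Set ℕ) := hA ▸ Set.mem_Icc.2 ⟨le_rfl, h2⟩
        exact this
      · obtain ⟨a, h1, h2, hA⟩ := mem_F2.1 h''
        have : a ∈ (∅ : Set ℕ) := hA ▸ mem_Sset.2 ⟨le_rfl, by omega, by omega⟩
        exact this
    · obtain ⟨a, h1, h2, hA⟩ := mem_F3.1 h'
      have : l - a ∈ (∅ : Set ℕ) := hA ▸ mem_Tset.2 (Or.inl rfl)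
      exact this
  rw [Finset.card_insert_of_notMem hnotmem]
  have hd12 : Disjoint (F1 l) (F2 l) := by
    simp only [Finset.disjoint_left]
    intro A h1 h2
    obtain ⟨a, b, ha1, ha2, ha3, rfl⟩ := mem_F1.1 h1
    obtain ⟨c, hc1, hc2, hA⟩ := mem_F2.1 h2
    exact Icc_ne_Sset hc1 hc2 hA
  have hd123 : Disjoint (F1 l ∪ F2 l) (F3 l) := by
    simp only [Finset.disjoint_left, Finset.mem_union]
    rintro A (h1 | h1) h2
    · obtain ⟨a, b, ha1, ha2, ha3, rfl⟩ := mem_F1.1 h1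
      obtain ⟨c, hc1, hc2, hA⟩ := mem_F3.1 h2
      exact Icc_ne_Tset hl hc1 hc2 hA
    · obtain ⟨c, hc1, hc2, rfl⟩ := mem_F2.1 h1
      obtain ⟨d, hd1, hd2, hA⟩ := mem_F3.1 h2
      exact Sset_ne_Tset hl hc1 hc2 hd1 hd2 hA
  rw [Finset.card_union_of_disjoint hd123, Finset.card_union_of_disjoint hd12]
  have hF2 : (F2 l).card = (l-1)/2 + 1 - 2 := by
    rw [F2, Finset.card_image_of_injOn, Nat.card_Icc]
    intro c hc c' hc' hcc
    simp only [Finset.mem_coe, Finset.mem_Icc] at hc hc'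
    have h1 : c ∈ Sset l c' := hcc ▸ mem_Sset.2 ⟨le_rfl, by omega, by omega⟩
    have h2 : c' ∈ Sset l c := hcc ▸ mem_Sset.2 ⟨le_rfl, by omega, by omega⟩
    exact le_antisymm h2.1 h1.1
  have hF3 : (F3 l).card = l - 1 + 1 - (l+3)/2 := by
    rw [F3, Finset.card_image_of_injOn, Nat.card_Icc]
    intro c hc c' hc' hcc
    simp only [Finset.mem_coe, Finset.mem_Icc] at hc hc'
    have h1 : l - c ∈ Tset l c' := hcc ▸ mem_Tset.2 (Or.inl rfl)
    have h2 : l - c' ∈ Tset l c := hcc ▸ mem_Tset.2 (Or.inl rfl)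
    rw [mem_Tset] at h1 h2
    omega
  rw [F1_card hl, hF2, hF3]
  have e1 : l*(l-1) = l*l - l := by rw [Nat.mul_sub]; ring_nf
  have e2 : l*(l+1) = l*l + l := by ring
  rw [e1, e2]
  have h3 : l ≤ l*l := Nat.le_mul_of_pos_left l (by omega)
  have h4 : l * l % 2 = (l % 2) * (l % 2) % 2 := Nat.mul_mod l l 2
  generalize l*l = M at h3 h4 ⊢
  omega
end
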